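/- Let A be a G-graded ring, M a G-graded left A-module, and B = END_A(M) the G-graded ring of graded endomorphisms of M. Then B is an epsilon-crossed product (i.e., B is epsilon-strongly graded and every homogeneous component B_l contains an epsilon-invertible element) if and only if supp(B) is closed under inversion and M and M(l) are epsilon-similar for every l ∈ supp(B). -/

import Mathlib

/-- A `G`-grading on a unital ring `A`: a family of additive subgroups with
`A_g A_h ⊆ A_{gh}`, `1 ∈ A₁`, whose internal direct sum is `A`. -/
structure RingGrading (G : Type*) [Group G] [DecidableEq G]
    (A : Type*) [Ring A] where
  comp : G → AddSubgroup A
  one_mem : (1 : A) ∈ comp 1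
  mul_mem : ∀ ⦃g h : G⦄ ⦃a b : A⦄, a ∈ comp g → b ∈ comp h → a * b ∈ comp (g * h)
  isInternal : DirectSum.IsInternal comp

variable {G : Type*} [Group G] [DecidableEq G] {A : Type*} [Ring A]

/-- A `G`-grading on a left `A`-module `M`, compatible with the ring grading `𝒜`. -/
structure ModGrading (𝒜 : RingGrading G A) (M : Type*)
    [AddCommGroup M] [Module A M] where
  comp : G → AddSubgroup M
  smul_mem : ∀ ⦃g h : G⦄ ⦃a : A⦄ ⦃m : M⦄,
    a ∈ 𝒜.comp g → m ∈ comp h → a • m ∈ comp (g * h)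
  isInternal : DirectSum.IsInternal comp

section GradedModules

variable {M N : Type*} [AddCommGroup M] [Module A M] [AddCommGroup N] [Module A N]

/-- An `A`-linear map `f : M → N` has degree `l` (with respect to given families of
homogeneous components) if `f(M_g) ⊆ N_{gl}` for all `g`.  Taking the family
`g ↦ N_{gl}` as codomain grading realizes graded morphisms `M → N(l)`. -/
def IsDegree (ℳ : G → AddSubgroup M) (𝒩 : G → AddSubgroup N)
    (f : M →ₗ[A] N) (l : G) : Prop :=
  ∀ g : G, ∀ m ∈ ℳ g, f m ∈ 𝒩 (g * l)

/-- A graded morphism `f : M → N` -- i.e. a degree-one `A`-linear map. -/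
def IsGradedHom (ℳ : G → AddSubgroup M) (𝒩 : G → AddSubgroup N)
    (f : M →ₗ[A] N) : Prop :=
  ∀ g : G, ∀ m ∈ ℳ g, f m ∈ 𝒩 g

/-- A submodule `N'` is graded if `N' = ⊕_g (N' ∩ M_g)`. -/
def IsGradedSubmodule (ℳ : G → AddSubgroup M) (N' : Submodule A M) : Prop :=
  N'.toAddSubgroup = ⨆ g : G, N'.toAddSubgroup ⊓ ℳ g

/-- The grading induced on (the subtype of) a submodule. -/
def subFam (ℳ : G → AddSubgroup M) (N' : Submodule A M) : G → AddSubgroup ↥N' :=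
  fun g => (ℳ g).comap N'.subtype.toAddMonoidHom

/-- The componentwise grading on `M⁽ⁿ⁾ = Fin n → M`. -/
def piFam (ℳ : G → AddSubgroup M) (n : ℕ) : G → AddSubgroup (Fin n → M) :=
  fun g => AddSubgroup.pi Set.univ fun _ => ℳ g

/-- The idempotent endomorphism `ε_{N'} = ι_{N'} ∘ π_{N'}` associated to a direct
sum decomposition `N = N' ⊕ N''`. -/
noncomputable def epsIdem (N' N'' : Submodule A N) (h : IsCompl N' N'') :
    N →ₗ[A] N :=
  N'.subtype ∘ₗ (Submodule.linearProjOfIsCompl (R := A) N' N'' h)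

/-- `N` divides `M` (relative to the given gradings): `N` is isomorphic, as a graded
module, to a graded direct summand of `M⁽ⁿ⁾` for some `n`. -/
def Divides (𝒩 : G → AddSubgroup N) (ℳ : G → AddSubgroup M) : Prop :=
  ∃ (n : ℕ) (V V' : Submodule A (Fin n → M)),
    IsGradedSubmodule (piFam ℳ n) V ∧ IsGradedSubmodule (piFam ℳ n) V' ∧
    IsCompl V V' ∧
    ∃ e : N ≃ₗ[A] ↥V, ∀ (g : G) (x : N),
      x ∈ 𝒩 g ↔ (e x : Fin n → M) ∈ piFam ℳ n g

/-- `N` semi-divides `M` (relative to the given gradings): there is a nonzero graded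
direct summand `N'` of `N` with `N' | M`, `ε_{N'} ∘ f = f` for every graded
`f : M → N` and `g ∘ ε_{N'} = g` for every graded `g : N → M`. -/
def SemiDivides (𝒩 : G → AddSubgroup N) (ℳ : G → AddSubgroup M) : Prop :=
  ∃ (N' N'' : Submodule A N), N' ≠ ⊥ ∧
    IsGradedSubmodule 𝒩 N' ∧ IsGradedSubmodule 𝒩 N'' ∧
    ∃ h : IsCompl N' N'',
      Divides (A := A) (subFam 𝒩 N') ℳ ∧
      (∀ f : M →ₗ[A] N, IsGradedHom ℳ 𝒩 f → epsIdem N' N'' h ∘ₗ f = f) ∧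
      (∀ f : N →ₗ[A] M, IsGradedHom 𝒩 ℳ f → f ∘ₗ epsIdem N' N'' h = f)

/-- `M` and `N` are epsilon-similar. -/
def EpsSimilar (ℳ : G → AddSubgroup M) (𝒩 : G → AddSubgroup N) : Prop :=
  ∃ (M' M'' : Submodule A M) (N' N'' : Submodule A N),
    M' ≠ ⊥ ∧ N' ≠ ⊥ ∧
    IsGradedSubmodule ℳ M' ∧ IsGradedSubmodule ℳ M'' ∧
    IsGradedSubmodule 𝒩 N' ∧ IsGradedSubmodule 𝒩 N'' ∧
    ∃ (hM : IsCompl M' M'') (hN : IsCompl N' N''),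
    ∃ (f : M →ₗ[A] N) (g : N →ₗ[A] M),
      IsGradedHom ℳ 𝒩 f ∧ IsGradedHom 𝒩 ℳ g ∧
      f ∘ₗ g = epsIdem N' N'' hN ∧ g ∘ₗ f = epsIdem M' M'' hM ∧
      (∀ u : M →ₗ[A] N, IsGradedHom ℳ 𝒩 u →
        epsIdem N' N'' hN ∘ₗ u = u ∧ u ∘ₗ epsIdem M' M'' hM = u) ∧
      (∀ v : N →ₗ[A] M, IsGradedHom 𝒩 ℳ v →
        v ∘ₗ epsIdem N' N'' hN = v ∧ epsIdem M' M'' hM ∘ₗ v = v)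

end GradedModules

section EndRing

variable {M : Type*} [AddCommGroup M] [Module A M]

/-- The degree-`l` component `B_l = Mor_A(M,M)_l` of the graded ring
`B = END_A(M)`, as an additive subgroup of the `A`-linear endomorphisms of `M`. -/
def endComp (ℳ : G → AddSubgroup M) (l : G) : AddSubgroup (M →ₗ[A] M) where
  carrier := {f : M →ₗ[A] M | IsDegree ℳ ℳ f l}
  zero_mem' := fun g m _ => by simpa using zero_mem (ℳ (g * l))
  add_mem' := by
    intro u v hu hv g m hm
    simpa using add_mem (hu g m hm) (hv g m hm)
  neg_mem' := by
    intro u hu g m hm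
    simpa using neg_mem (hu g m hm)

/-- The product `B_l B_k` inside the graded ring `B = END_A(M)` (whose
multiplication is `u · v = v ∘ u`), as an additive subgroup of `End_A(M)`. -/
def endMul (ℳ : G → AddSubgroup M) (l k : G) : AddSubgroup (M →ₗ[A] M) :=
  AddSubgroup.closure
    {w : M →ₗ[A] M | ∃ u ∈ endComp ℳ l, ∃ v ∈ endComp ℳ k, w = v ∘ₗ u}

/-- The support of the graded ring `B = END_A(M)`. -/
def endSupp (ℳ : G → AddSubgroup M) : Set G :=
  {l : G | endComp (A := A) ℳ l ≠ ⊥}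

/-- `B = END_A(M)` is an epsilon-strongly graded ring: for each `l` there is
`ε_l ∈ B_l B_{l⁻¹}` with `ε_l · u = u = u · ε_{l⁻¹}` for all `u ∈ B_l`
(products taken in `B`, i.e. `u · v = v ∘ u`). -/
def IsEpsilonStrongEnd (ℳ : G → AddSubgroup M) : Prop :=
  ∃ ε : G → (M →ₗ[A] M), ∀ l : G,
    ε l ∈ endMul ℳ l l⁻¹ ∧
    ∀ u ∈ endComp (A := A) ℳ l, u ∘ₗ ε l = u ∧ ε l⁻¹ ∘ₗ u = u

/-- `B = END_A(M)` is an epsilon-crossed product: it is epsilon-strongly graded and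
every component `B_l` contains an epsilon-invertible element. -/
def IsEpsilonCrossedEnd (ℳ : G → AddSubgroup M) : Prop :=
  ∃ ε : G → (M →ₗ[A] M),
    (∀ l : G,
      ε l ∈ endMul ℳ l l⁻¹ ∧
      ∀ u ∈ endComp (A := A) ℳ l, u ∘ₗ ε l = u ∧ ε l⁻¹ ∘ₗ u = u) ∧
    ∀ l : G, ∃ u ∈ endComp (A := A) ℳ l, ∃ v ∈ endComp (A := A) ℳ l⁻¹,
      v ∘ₗ u = ε l ∧ u ∘ₗ v = ε l⁻¹

end EndRing

set_option linter.unusedSectionVars false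

section Helpers

variable {M : Type*} [AddCommGroup M] [Module A M]

lemma mem_endComp_iff (ℳ : G → AddSubgroup M) (l : G) (f : M →ₗ[A] M) :
    f ∈ endComp (A := A) ℳ l ↔ IsDegree ℳ ℳ f l := Iff.rfl

lemma isGradedHom_shift_left (ℳ : G → AddSubgroup M) (l : G) (f : M →ₗ[A] M) :
    IsGradedHom ℳ (fun g => ℳ (g * l)) f ↔ f ∈ endComp (A := A) ℳ l :=
  Iff.rfl

lemma isGradedHom_shift_right (ℳ : G → AddSubgroup M) (l : G) (f : M →ₗ[A] M) :
    IsGradedHom (fun g => ℳ (g * l)) ℳ f ↔ f ∈ endComp (A := A) ℳ l⁻¹ := by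
  constructor
  · intro h g m hm
    exact h (g * l⁻¹) m (show m ∈ ℳ (g * l⁻¹ * l) by rwa [inv_mul_cancel_right])
  · intro h g m hm
    have := h (g * l) m hm
    rwa [mul_inv_cancel_right] at this

lemma isGradedSubmodule_shift (ℳ : G → AddSubgroup M) (l : G) (X : Submodule A M) :
    IsGradedSubmodule (A := A) (fun g => ℳ (g * l)) X ↔ IsGradedSubmodule (A := A) ℳ X := by
  unfold IsGradedSubmodule
  rw [show (⨆ g : G, X.toAddSubgroup ⊓ ℳ (g * l)) = ⨆ g : G, X.toAddSubgroup ⊓ ℳ g from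
    Function.Surjective.iSup_comp (f := fun g : G => g * l)
      (fun h => ⟨h * l⁻¹, by simp⟩) (g := fun h => X.toAddSubgroup ⊓ ℳ h)]

lemma endMul_le_endComp (ℳ : G → AddSubgroup M) (l k : G) :
    endMul (A := A) ℳ l k ≤ endComp (A := A) ℳ (l * k) := by
  rw [endMul, AddSubgroup.closure_le]
  rintro w ⟨u, hu, v, hv, rfl⟩
  intro g m hm
  have := hv (g * l) (u m) (hu g m hm)
  simpa [mul_assoc] using this

lemma comp_right_of_endMul (ℳ : G → AddSubgroup M) (l : G) {e : M →ₗ[A] M}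
    (he : ∀ u ∈ endComp (A := A) ℳ l, u ∘ₗ e = u) :
    ∀ x ∈ endMul (A := A) ℳ l l⁻¹, x ∘ₗ e = x := by
  intro x hx
  refine AddSubgroup.closure_induction ?_ ?_ ?_ ?_ hx
  · rintro w ⟨u, hu, v, hv, rfl⟩
    rw [LinearMap.comp_assoc, he u hu]
  · exact LinearMap.zero_comp e
  · intro x y _ _ hx hy
    rw [LinearMap.add_comp, hx, hy]
  · intro x _ hx
    rw [LinearMap.neg_comp, hx]

open DirectSum in
lemma decompose_comm (ℳ : G → AddSubgroup M) [DirectSum.Decomposition ℳ]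
    (π : M →ₗ[A] M) (hπ : ∀ g : G, ∀ m ∈ ℳ g, π m ∈ ℳ g) (x : M) (h : G) :
    (decompose ℳ (π x) h : M) = π (decompose ℳ x h : M) := by
  classical
  conv_lhs => rw [← DirectSum.sum_support_decompose ℳ x, map_sum, decompose_sum,
    DFinsupp.finset_sum_apply, AddSubmonoidClass.coe_finset_sum]
  rw [Finset.sum_eq_single h]
  · exact decompose_of_mem_same ℳ (hπ h _ (decompose ℳ x h).2)
  · intro g _ hgh
    exact decompose_of_mem_ne ℳ (hπ g _ (decompose ℳ x g).2) hgh
  · intro hh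
    rw [DFinsupp.notMem_support_iff.mp hh]
    simp

open DirectSum in
lemma isGradedSubmodule_of_components (ℳ : G → AddSubgroup M) [DirectSum.Decomposition ℳ]
    (X : Submodule A M)
    (hX : ∀ x ∈ X, ∀ h : G, (decompose ℳ x h : M) ∈ X) :
    IsGradedSubmodule (A := A) ℳ X := by
  classical
  refine le_antisymm ?_ (iSup_le fun g => inf_le_left)
  intro x hx
  rw [← DirectSum.sum_support_decompose ℳ x]
  refine AddSubgroup.sum_mem _ fun h _ => ?_
  exact le_iSup (fun g => X.toAddSubgroup ⊓ ℳ g) h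
    (AddSubgroup.mem_inf.2 ⟨hX x hx h, (decompose ℳ x h).2⟩)

open DirectSum in
lemma isGradedSubmodule_range_ker (ℳ : G → AddSubgroup M) [DirectSum.Decomposition ℳ]
    (π : M →ₗ[A] M) (hπ : ∀ g : G, ∀ m ∈ ℳ g, π m ∈ ℳ g) :
    IsGradedSubmodule (A := A) ℳ (LinearMap.range π) ∧
      IsGradedSubmodule (A := A) ℳ (LinearMap.ker π) := by
  constructor
  · refine isGradedSubmodule_of_components ℳ _ ?_
    rintro x ⟨y, rfl⟩ h
    exact ⟨(decompose ℳ y h : M), (decompose_comm ℳ π hπ y h).symm⟩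
  · refine isGradedSubmodule_of_components ℳ _ ?_
    intro x hx h
    have : (decompose ℳ (π x) h : M) = π (decompose ℳ x h : M) := decompose_comm ℳ π hπ x h
    rw [LinearMap.mem_ker.mp hx, decompose_zero] at this
    simpa [LinearMap.mem_ker] using this.symm

lemma isCompl_of_idem (π : M →ₗ[A] M) (hidem : π ∘ₗ π = π) :
    IsCompl (LinearMap.range π) (LinearMap.ker π) := by
  have : LinearMap.IsProj (LinearMap.range π) π :=
    { map_mem := fun x => LinearMap.mem_range_self π x
      map_id := by
        rintro x ⟨y, rfl⟩
        exact DFunLike.congr_fun hidem y }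
  exact this.isCompl

lemma epsIdem_of_idem (π : M →ₗ[A] M) (hidem : π ∘ₗ π = π)
    (h : IsCompl (LinearMap.range π) (LinearMap.ker π)) :
    epsIdem (LinearMap.range π) (LinearMap.ker π) h = π := by
  ext x
  have h1 : x - π x ∈ LinearMap.ker π := by
    rw [LinearMap.mem_ker, map_sub]
    show π x - (π ∘ₗ π) x = 0
    rw [hidem, sub_self]
  have key : Submodule.projectionOnto (LinearMap.range π) (LinearMap.ker π) h x
      = ⟨π x, LinearMap.mem_range_self π x⟩ := by
    conv_lhs => rw [show x = π x + (x - π x) by abel]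
    rw [map_add, Submodule.projectionOnto_apply_of_mem_right h h1, add_zero]
    exact Submodule.projectionOnto_apply_left h ⟨π x, LinearMap.mem_range_self π x⟩
  show (Submodule.projectionOnto _ _ h x : M) = π x
  rw [key]

end Helpers

section Helpers2

variable {M : Type*} [AddCommGroup M] [Module A M]

lemma exists_ne_zero_of_mem_endSupp (ℳ : G → AddSubgroup M) {l : G}
    (hl : l ∈ endSupp (A := A) ℳ) : ∃ w ∈ endComp (A := A) ℳ l, w ≠ 0 := by
  by_contra hcon
  push_neg at hcon
  exact hl ((AddSubgroup.eq_bot_iff_forall _).mpr hcon)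

end Helpers2

/-- For a `G`-graded ring `A` and a graded left `A`-module `M`, the
graded ring `B = END_A(M)` is an epsilon-crossed product iff `supp(B)` is closed
under inversion and `M` and `M(l)` are epsilon-similar for every `l ∈ supp(B)`. -/
theorem end_isEpsilonCrossed_iff {M : Type*} [AddCommGroup M] [Module A M]
    (𝒜 : RingGrading G A) (ℳ : ModGrading 𝒜 M) :
    IsEpsilonCrossedEnd (A := A) ℳ.comp ↔
      ((∀ l ∈ endSupp (A := A) ℳ.comp, l⁻¹ ∈ endSupp (A := A) ℳ.comp) ∧
        ∀ l ∈ endSupp (A := A) ℳ.comp,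
          EpsSimilar (A := A) ℳ.comp (fun g => ℳ.comp (g * l))) := by
  constructor
  · rintro ⟨ε, hstr, hinv⟩
    have hsupp : ∀ l ∈ endSupp (A := A) ℳ.comp, l⁻¹ ∈ endSupp (A := A) ℳ.comp := by
      intro l hl
      obtain ⟨u, hu, v, hv, hvu, huv⟩ := hinv l
      obtain ⟨w, hwmem, hw0⟩ := exists_ne_zero_of_mem_endSupp ℳ.comp hl
      have hε0 : ε l ≠ 0 := fun h0 =>
        hw0 (by rw [← ((hstr l).2 w hwmem).1, h0, LinearMap.comp_zero])
      intro hbot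
      rw [hbot, AddSubgroup.mem_bot] at hv
      exact hε0 (by rw [← hvu, hv, LinearMap.zero_comp])
    refine ⟨hsupp, ?_⟩
    intro l hl
    letI : DirectSum.Decomposition ℳ.comp := ℳ.isInternal.chooseDecomposition
    obtain ⟨u, hu, v, hv, hvu, huv⟩ := hinv l
    obtain ⟨w, hwmem, hw0⟩ := exists_ne_zero_of_mem_endSupp ℳ.comp hl
    have hε0 : ε l ≠ 0 := fun h0 =>
      hw0 (by rw [← ((hstr l).2 w hwmem).1, h0, LinearMap.comp_zero])
    have hε0' : ε l⁻¹ ≠ 0 := fun h0 =>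
      hw0 (by rw [← ((hstr l).2 w hwmem).2, h0, LinearMap.zero_comp])
    have hdeg : ∀ g : G, ∀ m ∈ ℳ.comp g, ε l m ∈ ℳ.comp g := by
      intro g m hm
      have := endMul_le_endComp ℳ.comp l l⁻¹ (hstr l).1 g m hm
      simpa using this
    have hdeg' : ∀ g : G, ∀ m ∈ ℳ.comp g, ε l⁻¹ m ∈ ℳ.comp g := by
      intro g m hm
      have := endMul_le_endComp ℳ.comp l⁻¹ l⁻¹⁻¹ (hstr l⁻¹).1 g m hm
      simpa using this
    have hidem : ε l ∘ₗ ε l = ε l :=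
      comp_right_of_endMul ℳ.comp l (fun u hu => ((hstr l).2 u hu).1) _ (hstr l).1
    have hidem' : ε l⁻¹ ∘ₗ ε l⁻¹ = ε l⁻¹ :=
      comp_right_of_endMul ℳ.comp l⁻¹ (fun u hu => ((hstr l⁻¹).2 u hu).1) _ (hstr l⁻¹).1
    have hM := isCompl_of_idem (ε l) hidem
    have hN := isCompl_of_idem (ε l⁻¹) hidem'
    obtain ⟨hgr1, hgr2⟩ := isGradedSubmodule_range_ker ℳ.comp (ε l) hdeg
    obtain ⟨hgr3, hgr4⟩ := isGradedSubmodule_range_ker ℳ.comp (ε l⁻¹) hdeg'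
    have heps : epsIdem _ _ hM = ε l := epsIdem_of_idem (ε l) hidem hM
    have heps' : epsIdem _ _ hN = ε l⁻¹ := epsIdem_of_idem (ε l⁻¹) hidem' hN
    refine ⟨LinearMap.range (ε l), LinearMap.ker (ε l),
      LinearMap.range (ε l⁻¹), LinearMap.ker (ε l⁻¹),
      fun h => hε0 (LinearMap.range_eq_bot.mp h),
      fun h => hε0' (LinearMap.range_eq_bot.mp h),
      hgr1, hgr2,
      (isGradedSubmodule_shift ℳ.comp l _).mpr hgr3,
      (isGradedSubmodule_shift ℳ.comp l _).mpr hgr4,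
      hM, hN, u, v,
      (isGradedHom_shift_left ℳ.comp l u).mpr hu,
      (isGradedHom_shift_right ℳ.comp l v).mpr hv,
      by rw [heps']; exact huv,
      by rw [heps]; exact hvu, ?_, ?_⟩
    · intro u' hu'
      have hu'' := (isGradedHom_shift_left ℳ.comp l u').mp hu'
      constructor
      · rw [heps']; exact ((hstr l).2 u' hu'').2
      · rw [heps]; exact ((hstr l).2 u' hu'').1
    · intro v' hv'
      have hv'' := (isGradedHom_shift_right ℳ.comp l v').mp hv'
      constructor
      · rw [heps']; exact ((hstr l⁻¹).2 v' hv'').1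
      · rw [heps]
        have := ((hstr l⁻¹).2 v' hv'').2
        rwa [inv_inv] at this
  · rintro ⟨hinv, hsim⟩
    classical
    have key : ∀ l : G, ∃ q : (M →ₗ[A] M) × (M →ₗ[A] M) × (M →ₗ[A] M) × (M →ₗ[A] M),
        (l ∈ endSupp (A := A) ℳ.comp →
          q.2.2.1 ∈ endComp (A := A) ℳ.comp l ∧ q.2.2.2 ∈ endComp (A := A) ℳ.comp l⁻¹ ∧
          q.2.2.2 ∘ₗ q.2.2.1 = q.1 ∧ q.2.2.1 ∘ₗ q.2.2.2 = q.2.1 ∧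
          (∀ u ∈ endComp (A := A) ℳ.comp l, q.2.1 ∘ₗ u = u ∧ u ∘ₗ q.1 = u) ∧
          (∀ v ∈ endComp (A := A) ℳ.comp l⁻¹, v ∘ₗ q.2.1 = v ∧ q.1 ∘ₗ v = v)) ∧
        (l ∉ endSupp (A := A) ℳ.comp → q.1 = 0) := by
      intro l
      by_cases hl : l ∈ endSupp (A := A) ℳ.comp
      · obtain ⟨M', M'', N', N'', hM0, hN0, hg1, hg2, hg3, hg4, hMc, hNc, f, g,
          hf, hg, hfg, hgf, hU, hV⟩ := hsim l hl
        refine ⟨(epsIdem M' M'' hMc, epsIdem N' N'' hNc, f, g), fun _ => ?_,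
          fun h => absurd hl h⟩
        refine ⟨(isGradedHom_shift_left ℳ.comp l f).mp hf,
          (isGradedHom_shift_right ℳ.comp l g).mp hg, hgf, hfg, ?_, ?_⟩
        · intro u hu
          exact hU u ((isGradedHom_shift_left ℳ.comp l u).mpr hu)
        · intro v hv
          exact hV v ((isGradedHom_shift_right ℳ.comp l v).mpr hv)
      · exact ⟨(0, 0, 0, 0), fun h => absurd h hl, fun _ => rfl⟩
    choose F hF1 hF2 using key
    have bridge : ∀ l ∈ endSupp (A := A) ℳ.comp, (F l).2.1 = (F l⁻¹).1 := by
      intro l hl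
      have hl' : l⁻¹ ∈ endSupp (A := A) ℳ.comp := hinv l hl
      obtain ⟨hf, hg, hgf, hfg, hU, hV⟩ := hF1 l hl
      obtain ⟨hf', hg', hgf', hfg', hU', hV'⟩ := hF1 l⁻¹ hl'
      rw [inv_inv] at hg' hV'
      have e1 : (F l⁻¹).1 ∘ₗ (F l).2.1 = (F l).2.1 := by
        calc (F l⁻¹).1 ∘ₗ (F l).2.1
            = (F l⁻¹).1 ∘ₗ ((F l).2.2.1 ∘ₗ (F l).2.2.2) := by rw [hfg]
          _ = ((F l⁻¹).1 ∘ₗ (F l).2.2.1) ∘ₗ (F l).2.2.2 := by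
              rw [LinearMap.comp_assoc]
          _ = (F l).2.2.1 ∘ₗ (F l).2.2.2 := by rw [(hV' _ hf).2]
          _ = (F l).2.1 := hfg
      have e2 : (F l⁻¹).1 ∘ₗ (F l).2.1 = (F l⁻¹).1 := by
        calc (F l⁻¹).1 ∘ₗ (F l).2.1
            = ((F l⁻¹).2.2.2 ∘ₗ (F l⁻¹).2.2.1) ∘ₗ (F l).2.1 := by rw [hgf']
          _ = (F l⁻¹).2.2.2 ∘ₗ ((F l⁻¹).2.2.1 ∘ₗ (F l).2.1) := by
              rw [LinearMap.comp_assoc]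
          _ = (F l⁻¹).2.2.2 ∘ₗ (F l⁻¹).2.2.1 := by rw [(hV _ hf').1]
          _ = (F l⁻¹).1 := hgf'
      exact e1.symm.trans e2
    refine ⟨fun l => (F l).1, ?_, ?_⟩
    · intro l
      by_cases hl : l ∈ endSupp (A := A) ℳ.comp
      · obtain ⟨hf, hg, hgf, hfg, hU, hV⟩ := hF1 l hl
        refine ⟨?_, ?_⟩
        · show (F l).1 ∈ endMul (A := A) ℳ.comp l l⁻¹
          rw [← hgf]
          exact AddSubgroup.subset_closure ⟨_, hf, _, hg, rfl⟩
        · intro u hu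
          refine ⟨(hU u hu).2, ?_⟩
          show (F l⁻¹).1 ∘ₗ u = u
          rw [← bridge l hl]
          exact (hU u hu).1
      · have hbot : endComp (A := A) ℳ.comp l = ⊥ := not_not.mp hl
        refine ⟨by show (F l).1 ∈ endMul (A := A) ℳ.comp l l⁻¹; rw [hF2 l hl]; exact zero_mem _, ?_⟩
        intro u hu
        rw [hbot, AddSubgroup.mem_bot] at hu
        subst hu
        exact ⟨LinearMap.zero_comp _, LinearMap.comp_zero _⟩
    · intro l
      by_cases hl : l ∈ endSupp (A := A) ℳ.comp
      · obtain ⟨hf, hg, hgf, hfg, hU, hV⟩ := hF1 l hl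
        exact ⟨_, hf, _, hg, hgf, by show (F l).2.2.1 ∘ₗ (F l).2.2.2 = (F l⁻¹).1; rw [← bridge l hl]; exact hfg⟩
      · have hl' : l⁻¹ ∉ endSupp (A := A) ℳ.comp := fun h => hl (by simpa using hinv _ h)
        refine ⟨0, zero_mem _, 0, zero_mem _, ?_, ?_⟩
        · simp [hF2 l hl]
        · simp [hF2 l⁻¹ hl']
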